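/- Suppose x, y in (0,1), and normalized confusion matrices for two groups satisfy equal opportunity (TPa·(1-y) = TPb·(1-x)), false positive parity (FPa·y = FPb·x), predictive parity (TPa·FPb = TPb·FPa), and FPb > 0 and TPb > 0. Then x = y. -/
import Mathlib


theorem stmt
    (x y TPa FNa TNa FPa TPb FNb TNb FPb : ℝ)
    (hx0 : 0 < x) (hx1 : x < 1) (hy0 : 0 < y) (hy1 : y < 1)
    (hTPa : 0 ≤ TPa) (hFNa : 0 ≤ FNa) (hTNa : 0 ≤ TNa) (hFPa : 0 ≤ FPa)
    (hTPb : 0 ≤ TPb) (hFNb : 0 ≤ FNb) (hTNb : 0 ≤ TNb) (hFPb : 0 ≤ FPb)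
    (hra : TPa + FNa = 1 - x) (hra' : TNa + FPa = x)
    (hrb : TPb + FNb = 1 - y) (hrb' : TNb + FPb = y)
    (heo : TPa * (1 - y) = TPb * (1 - x))
    (hfpp : FPa * y = FPb * x)
    (hpp : TPa * FPb = TPb * FPa)
    (hFPbpos : 0 < FPb)
    (hTPbpos : 0 < TPb)
    : x = y := by
  have key : TPb * FPb * ((1 - x) * y - x * (1 - y)) = 0 := by
    linear_combination (-FPb*y)*heo + TPb*(1-y)*hfpp + y*(1-y)*hpp
  have h2 : (1 - x) * y - x * (1 - y) = 0 := by
    have := mul_pos hTPbpos hFPbpos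
    have := mul_ne_zero (ne_of_gt hTPbpos) (ne_of_gt hFPbpos)
    rcases mul_eq_zero.mp key with h | h
    · exact absurd h this
    · exact h
  nlinarith [h2]
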